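/- arXiv:1708.04186 — 2 statements merged into one kernel-verified Lean document; each statement's English description precedes it below -/
import Mathlib

section
/- For η > 2, the leading-order expansion of the corner success-probability exponent for large s gives: λ ∫_0^{π/2} ∫_0^∞ [s g(r)/(1+s g(r))] r dr dφ ∼ (λπ/4) s^{2/η} / sinc(2π/η) as s → ∞, where sinc(x) = sin(x)/x. -/
/-!
Substituting `r = s^{1/η} t` turns the inner integral into `s^{2/η} ∫₀^∞ t m/(1 + m) dt` with
`m = min(s, t^{-η})`. As `s → ∞` this integrand becomes `t/(1 + t^η)` pointwise while staying below
it, so by dominated convergence the integral tends to `∫₀^∞ t/(1 + t^η) dt`. The substitution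
`u = t^η` and `x = u/(1 + u)` turns the latter into the Beta integral `B(2/η, 1 - 2/η)/η`, which
Euler's reflection formula evaluates to `π / (η sin(2π/η))`; the angular integral contributes `π/2`.
-/

open MeasureTheory Real Filter Asymptotics Set Topology

lemma integral_Ioo_rpow_mul_one_sub_rpow_neg {a : ℝ} (h0 : 0 < a) (h1 : a < 1) :
    ∫ x in Ioo 0 1, x ^ (a - 1) * (1 - x) ^ (-a) = π / sin (π * a) := by
  have hbeta : Complex.betaIntegral a (1 - a) = ↑(π / sin (π * a)) := by
    have h := Complex.Gamma_mul_Gamma_eq_betaIntegral (s := a) (t := 1 - a)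
      (by simpa) (by simpa using h1)
    rw [Complex.Gamma_mul_Gamma_one_sub, add_sub_cancel, Complex.Gamma_one, one_mul] at h
    push_cast
    exact h.symm
  have hreal : Complex.betaIntegral a (1 - a)
      = ↑(∫ x in (0:ℝ)..1, x ^ (a - 1) * (1 - x) ^ (-a)) := by
    rw [Complex.betaIntegral, ← intervalIntegral.integral_ofReal]
    refine intervalIntegral.integral_congr fun x hx => ?_
    rw [uIcc_of_le zero_le_one] at hx
    have hx' : 0 ≤ 1 - x := by linarith [hx.2]
    simp only [Complex.ofReal_mul, Complex.ofReal_cpow hx.1, Complex.ofReal_cpow hx']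
    push_cast
    ring_nf
  rw [← integral_Ioc_eq_integral_Ioo, ← intervalIntegral.integral_of_le zero_le_one]
  exact_mod_cast hreal.symm.trans hbeta

lemma image_div_one_sub_Ioo : (fun x : ℝ => x / (1 - x)) '' Ioo 0 1 = Ioi 0 := by
  ext u
  refine ⟨?_, fun (hu : 0 < u) => ⟨u / (1 + u), ?_, ?_⟩⟩
  · rintro ⟨x, ⟨hx0, hx1⟩, rfl⟩
    exact div_pos hx0 (by linarith)
  · exact ⟨by positivity, by rw [div_lt_one (by linarith)]; linarith⟩
  · field_simp
    ring

lemma integral_Ioi_rpow_div_one_add {a : ℝ} (h0 : 0 < a) (h1 : a < 1) :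
    ∫ u in Ioi (0:ℝ), u ^ (a - 1) / (1 + u) = π / sin (π * a) := by
  have hderiv : ∀ x ∈ Ioo (0:ℝ) 1,
      HasDerivWithinAt (fun x => x / (1 - x)) ((1 - x)⁻¹ ^ 2) (Ioo 0 1) x := by
    intro x hx
    have hx1 : 1 - x ≠ 0 := by linarith [hx.2]
    refine (((hasDerivAt_id' x).div ((hasDerivAt_const x 1).sub (hasDerivAt_id' x))
      hx1).congr_deriv ?_).hasDerivWithinAt
    simp only [Pi.sub_apply]
    field_simp
    ring
  have hinj : InjOn (fun x : ℝ => x / (1 - x)) (Ioo 0 1) := by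
    intro x hx y hy hxy
    have hx1 : 1 - x ≠ 0 := by linarith [hx.2]
    have hy1 : 1 - y ≠ 0 := by linarith [hy.2]
    field_simp at hxy
    linarith
  rw [← image_div_one_sub_Ioo, integral_image_eq_integral_abs_deriv_smul measurableSet_Ioo
    hderiv hinj, ← integral_Ioo_rpow_mul_one_sub_rpow_neg h0 h1]
  refine setIntegral_congr_fun measurableSet_Ioo fun x ⟨hx0, hx1⟩ => ?_
  have h1x : 0 < 1 - x := by linarith
  have hsum : 1 + x / (1 - x) = (1 - x)⁻¹ := by field_simp; ring
  rw [smul_eq_mul, hsum, abs_of_nonneg (by positivity), div_rpow hx0.le h1x.le, inv_pow,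
    ← rpow_natCast, ← rpow_neg h1x.le, ← rpow_neg_one, div_div,
    ← rpow_add h1x, mul_div_left_comm, ← rpow_sub h1x]
  congr 2
  ring

lemma sin_two_pi_div_pos {η : ℝ} (hη : 2 < η) : 0 < sin (2 * π / η) :=
  sin_pos_of_pos_of_lt_pi (by positivity)
    (by rw [div_lt_iff₀ (by linarith)]; nlinarith [pi_pos])

lemma integral_Ioi_div_one_add_rpow {η : ℝ} (hη : 2 < η) :
    ∫ t in Ioi (0:ℝ), t / (1 + t ^ η) = π / (η * sin (2 * π / η)) := by
  have hη0 : 0 < η := by linarith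
  have hsubst := integral_comp_rpow_Ioi_of_pos (g := fun y => y ^ (2 / η - 1) / (1 + y)) hη0
  rw [integral_Ioi_rpow_div_one_add (by positivity) (by rwa [div_lt_one hη0])] at hsubst
  have hpointwise : ∀ t ∈ Ioi (0:ℝ),
      (η * t ^ (η - 1)) • ((t ^ η) ^ (2 / η - 1) / (1 + t ^ η)) = η * (t / (1 + t ^ η)) := by
    intro t ht
    rw [smul_eq_mul, ← rpow_mul (le_of_lt ht), show η * (2 / η - 1) = 2 - η by field_simp,
      mul_div_assoc', mul_assoc, ← rpow_add ht, show η - 1 + (2 - η) = 1 by ring, rpow_one,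
      mul_div_assoc]
  rw [setIntegral_congr_fun measurableSet_Ioi hpointwise, integral_const_mul,
    show π * (2 / η) = 2 * π / η by ring] at hsubst
  rw [eq_div_iff (by have := sin_two_pi_div_pos hη; positivity), ← mul_assoc, mul_comm _ η,
    hsubst, div_mul_cancel₀ _ (sin_two_pi_div_pos hη).ne']

lemma integral_Ioi_div_one_add_rpow_pos {η : ℝ} (hη : 2 < η) :
    0 < ∫ t in Ioi (0:ℝ), t / (1 + t ^ η) := by
  have hη0 : 0 < η := by linarith
  have hsin := sin_two_pi_div_pos hη
  rw [integral_Ioi_div_one_add_rpow hη]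
  positivity

lemma div_one_add_le_div_one_add {x y : ℝ} (hx : 0 ≤ x) (hxy : x ≤ y) :
    x / (1 + x) ≤ y / (1 + y) := by
  rw [div_le_div_iff₀ (by linarith) (by linarith)]
  linarith

lemma integral_Ioi_eq_rpow_mul_integral_min {η s : ℝ} (hη : η ≠ 0) (hs : 0 < s) :
    ∫ r in Ioi (0:ℝ), s * min 1 (r ^ (-η)) / (1 + s * min 1 (r ^ (-η))) * r
      = s ^ (2 / η) * ∫ t in Ioi (0:ℝ), min s (t ^ (-η)) / (1 + min s (t ^ (-η))) * t := by
  set b := s ^ (1 / η)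
  have hb : 0 < b := by positivity
  have hbη : b ^ (-η) = s⁻¹ := by
    rw [← rpow_mul hs.le, show 1 / η * -η = -1 by field_simp, rpow_neg_one]
  have hscale : ∀ t ∈ Ioi (0:ℝ),
      s * min 1 ((b * t) ^ (-η)) / (1 + s * min 1 ((b * t) ^ (-η))) * (b * t)
        = b * (min s (t ^ (-η)) / (1 + min s (t ^ (-η))) * t) := by
    intro t ht
    rw [mul_rpow hb.le (le_of_lt ht), hbη, mul_min_of_nonneg _ _ hs.le, mul_one,
      mul_inv_cancel_left₀ hs.ne']
    ring
  have h := integral_comp_mul_left_Ioi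
    (fun r => s * min 1 (r ^ (-η)) / (1 + s * min 1 (r ^ (-η))) * r) 0 hb
  rw [mul_zero, setIntegral_congr_fun measurableSet_Ioi hscale, integral_const_mul,
    smul_eq_mul] at h
  have hbb : b * b = s ^ (2 / η) := by rw [← rpow_add hs]; ring_nf
  rw [eq_inv_mul_iff_mul_eq₀ hb.ne'] at h
  rw [← h, ← mul_assoc, hbb]

lemma tendsto_integral_Ioi_min_rpow {η : ℝ} (hη : 2 < η) :
    Tendsto (fun s => ∫ t in Ioi (0:ℝ), min s (t ^ (-η)) / (1 + min s (t ^ (-η))) * t) atTop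
      (𝓝 (∫ t in Ioi (0:ℝ), t / (1 + t ^ η))) := by
  have hlim : ∀ t ∈ Ioi (0:ℝ), t ^ (-η) / (1 + t ^ (-η)) * t = t / (1 + t ^ η) := by
    intro t ht
    have : 0 < t ^ η := rpow_pos_of_pos ht η
    rw [rpow_neg (le_of_lt ht)]
    field_simp
    ring
  refine tendsto_integral_filter_of_dominated_convergence (fun t => t / (1 + t ^ η))
    (Eventually.of_forall fun s => by fun_prop) ?_
    -- a non-integrable function has Bochner integral `0`
    (Integrable.of_integral_ne_zero (integral_Ioi_div_one_add_rpow_pos hη).ne') ?_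
  · filter_upwards [eventually_ge_atTop 0] with s hs
    filter_upwards [ae_restrict_mem measurableSet_Ioi] with t (ht : 0 < t)
    have hm : 0 ≤ min s (t ^ (-η)) := le_min hs (by positivity)
    rw [← hlim t ht, norm_of_nonneg (by positivity)]
    gcongr ?_ * _
    exact div_one_add_le_div_one_add hm (min_le_right _ _)
  · filter_upwards [ae_restrict_mem measurableSet_Ioi] with t ht
    rw [← hlim t ht]
    refine tendsto_const_nhds.congr' ?_
    filter_upwards [eventually_ge_atTop (t ^ (-η))] with s hs
    rw [min_eq_right hs]

theorem corner_exponent_asymptotic_general (η lam : ℝ) (hη : 2 < η) :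
    (fun s : ℝ => lam * ∫ _φ in Set.Ioo (0:ℝ) (π/2), ∫ r in Set.Ioi (0:ℝ),
        (s * min 1 (r ^ (-η)) / (1 + s * min 1 (r ^ (-η)))) * r)
      ~[atTop]
    (fun s : ℝ => (lam * π / 4) * s ^ (2/η) / (Real.sin (2*π/η) / (2*π/η))) := by
  have hJ := (isEquivalent_const_iff_tendsto (integral_Ioi_div_one_add_rpow_pos hη).ne').2
    (tendsto_integral_Ioi_min_rpow hη)
  refine (((IsEquivalent.refl (u := fun s : ℝ => lam * (π / 2) * s ^ (2 / η))).mul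
    hJ).congr_left ?_).congr_right ?_
  · filter_upwards [eventually_gt_atTop 0] with s hs
    rw [setIntegral_const, volume_real_Ioo_of_le (by positivity), smul_eq_mul,
      integral_Ioi_eq_rpow_mul_integral_min (by linarith : 0 < η).ne' hs]
    simp only [Pi.mul_apply]
    ring
  · have hη0 : η ≠ 0 := by linarith
    have hsin := (sin_two_pi_div_pos hη).ne'
    refine Eventually.of_forall fun s => ?_
    simp only [Pi.mul_apply, Function.const_apply, integral_Ioi_div_one_add_rpow hη]
    field_simp
    ring

/-- Leading-order large-s expansion of the corner success-probability exponent: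
λ ∫_0^{π/2} ∫_0^∞ s g(r)/(1+s g(r)) r dr dφ ∼ (λπ/4) s^{2/η} / sinc(2π/η) as s → ∞,
where g(r) = min(1, r^{-η}) and sinc(x) = sin(x)/x. -/
theorem corner_exponent_asymptotic (η lam : ℝ) (hη : 2 < η) (hlam : 0 < lam) :
    (fun s : ℝ => lam * ∫ _φ in Set.Ioo (0:ℝ) (π/2), ∫ r in Set.Ioi (0:ℝ),
        (s * min 1 (r ^ (-η)) / (1 + s * min 1 (r ^ (-η)))) * r)
      ~[atTop]
    (fun s : ℝ => (lam * π / 4) * s ^ (2/η) / (Real.sin (2*π/η) / (2*π/η))) :=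
  corner_exponent_asymptotic_general η lam hη
end

section
/- For d₀ = 1 and 0 < u ≤ 2, with Θ uniform on [0, π/2] and X = |e^{iΘ} − u|, one has P(X ≤ 1) = (4/π) arctan( √( (2 − u)/(2 + u) ) ); and P(X ≤ 1) = 0 for u > 2. -/
/-!
Since |e^{iθ} − u|² = 1 − 2u cos θ + u², the event X ≤ 1 is {u/2 ≤ cos Θ}. On [0, π/2] this is
the interval [0, arccos (u/2)] when u ≤ 2 and empty when u > 2, so the uniform law gives
P(X ≤ 1) = (2/π) arccos (u/2), and the half-angle formula arccos x = 2 arctan √((1 − x)/(1 + x))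
turns this into the stated closed form.
-/

open MeasureTheory Real Set

lemma norm_exp_mul_I_sub_ofReal_le_one_iff {u : ℝ} (hu : 0 < u) (θ : ℝ) :
    ‖Complex.exp (θ * Complex.I) - u‖ ≤ 1 ↔ u / 2 ≤ cos θ := by
  have hnormSq : ‖Complex.exp (θ * Complex.I) - u‖ ^ 2 = 1 - 2 * u * cos θ + u ^ 2 := by
    rw [Complex.sq_norm, Complex.normSq_apply]
    simp only [Complex.sub_re, Complex.sub_im, Complex.exp_ofReal_mul_I_re,
      Complex.exp_ofReal_mul_I_im, Complex.ofReal_re, Complex.ofReal_im]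
    nlinarith [sin_sq_add_cos_sq θ]
  rw [← sq_le_one_iff₀ (norm_nonneg _), hnormSq, div_le_iff₀ two_pos]
  constructor <;> intro h <;> nlinarith

lemma le_cos_iff_le_arccos {c θ : ℝ} (hc : -1 ≤ c) (hc₁ : c ≤ 1) (hθ₀ : 0 ≤ θ)
    (hθπ : θ ≤ π) :
    c ≤ cos θ ↔ θ ≤ arccos c := by
  constructor
  · intro h
    simpa only [arccos_cos hθ₀ hθπ] using arccos_le_arccos h
  · intro h
    simpa only [cos_arccos hc hc₁] using cos_le_cos_of_nonneg_of_le_pi hθ₀ (arccos_le_pi c) h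

lemma setOf_le_cos_inter_Icc_zero_pi_div_two {c : ℝ} (hc₀ : 0 ≤ c) (hc₁ : c ≤ 1) :
    {θ | c ≤ cos θ} ∩ Icc 0 (π / 2) = Icc 0 (arccos c) := by
  have hle_iff {θ : ℝ} (hθ₀ : 0 ≤ θ) (hθ : θ ≤ π / 2) : c ≤ cos θ ↔ θ ≤ arccos c :=
    le_cos_iff_le_arccos (by linarith) hc₁ hθ₀ (by linarith [pi_pos])
  ext θ
  simp only [mem_inter_iff, mem_ofPred_eq, mem_Icc]
  constructor
  · rintro ⟨h, hθ₀, hθ⟩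
    exact ⟨hθ₀, (hle_iff hθ₀ hθ).mp h⟩
  · rintro ⟨hθ₀, hθ⟩
    have hθ' : θ ≤ π / 2 := hθ.trans (arccos_le_pi_div_two.mpr hc₀)
    exact ⟨(hle_iff hθ₀ hθ').mpr hθ, hθ₀, hθ'⟩

lemma setOf_le_cos_eq_empty {c : ℝ} (hc : 1 < c) : {θ | c ≤ cos θ} = ∅ :=
  eq_empty_of_forall_notMem fun θ h => (hc.trans_le h).not_ge (cos_le_one θ)

lemma arccos_eq_two_mul_arctan_sqrt {x : ℝ} (hx₁ : -1 < x) (hx₂ : x ≤ 1) :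
    arccos x = 2 * arctan √((1 - x) / (1 + x)) := by
  set t := √((1 - x) / (1 + x))
  have ht : t ^ 2 = (1 - x) / (1 + x) := sq_sqrt (div_nonneg (by linarith) (by linarith))
  have hx : 0 < 1 + x := by linarith
  have hcos : cos (2 * arctan t) = x := by
    rw [cos_two_mul, cos_sq_arctan, ht]
    field_simp
    ring
  have harctan₀ : 0 ≤ arctan t := arctan_nonneg.mpr (sqrt_nonneg _)
  rw [← hcos, arccos_cos (by linarith) (by linarith [arctan_lt_pi_div_two t])]

lemma measure_preimage_eq_of_map_eq_smul_restrict {Ω : Type*} [MeasurableSpace Ω]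
    {μ : Measure Ω} {X : Ω → ℝ} (hX : Measurable X) {c : ENNReal} {I S : Set ℝ}
    (hmap : μ.map X = c • volume.restrict I) (hS : MeasurableSet S) :
    μ (X ⁻¹' S) = c * volume (S ∩ I) := by
  rw [← Measure.map_apply hX hS, hmap, Measure.smul_apply, Measure.restrict_apply hS,
    smul_eq_mul]

theorem nearfield_probability_unit_general (Ω : Type*) [MeasurableSpace Ω] (μ : Measure Ω)
    (Θ : Ω → ℝ) (hΘ : Measurable Θ)
    (hunif : Measure.map Θ μ
      = (ENNReal.ofReal (2/π)) • (volume.restrict (Set.Icc (0:ℝ) (π/2))))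
    (u : ℝ) (hu : 0 < u) :
    (u ≤ 2 →
      (μ {ω | ‖Complex.exp ((Θ ω : ℂ) * Complex.I) - (u:ℂ)‖ ≤ 1}).toReal
        = (4/π) * Real.arctan (Real.sqrt ((2 - u) / (2 + u)))) ∧
    (2 < u →
      (μ {ω | ‖Complex.exp ((Θ ω : ℂ) * Complex.I) - (u:ℂ)‖ ≤ 1}).toReal = 0) := by
  have hevent : {ω | ‖Complex.exp ((Θ ω : ℂ) * Complex.I) - (u:ℂ)‖ ≤ 1}
      = Θ ⁻¹' {θ | u / 2 ≤ cos θ} := by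
    ext ω
    exact norm_exp_mul_I_sub_ofReal_le_one_iff hu (Θ ω)
  have hclosed : IsClosed {θ : ℝ | u / 2 ≤ cos θ} := isClosed_le continuous_const continuous_cos
  rw [hevent, measure_preimage_eq_of_map_eq_smul_restrict hΘ hunif hclosed.measurableSet]
  refine ⟨fun hu₂ => ?_, fun hu₂ => ?_⟩
  · have hhalf : (1 - u / 2) / (1 + u / 2) = (2 - u) / (2 + u) := by
      field_simp
    rw [setOf_le_cos_inter_Icc_zero_pi_div_two (by positivity) (by linarith), volume_Icc, sub_zero,
      arccos_eq_two_mul_arctan_sqrt (by linarith) (by linarith), hhalf, ENNReal.toReal_mul,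
      ENNReal.toReal_ofReal (by positivity), ENNReal.toReal_ofReal (by positivity)]
    ring
  · rw [setOf_le_cos_eq_empty (by linarith), empty_inter, measure_empty, mul_zero,
      ENNReal.toReal_zero]

/-- For unit link distance d₀ = 1 and Θ uniform on [0, π/2], X = |e^{iΘ} − u|:
P(X ≤ 1) = (4/π) arctan √((2−u)/(2+u)) for 0 < u ≤ 2, and P(X ≤ 1) = 0 for u > 2. -/
theorem nearfield_probability_unit (Ω : Type*) [MeasurableSpace Ω] (μ : Measure Ω)
    [IsProbabilityMeasure μ] (Θ : Ω → ℝ) (hΘ : Measurable Θ)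
    (hunif : Measure.map Θ μ
      = (ENNReal.ofReal (2/π)) • (volume.restrict (Set.Icc (0:ℝ) (π/2))))
    (u : ℝ) (hu : 0 < u) :
    (u ≤ 2 →
      (μ {ω | ‖Complex.exp ((Θ ω : ℂ) * Complex.I) - (u:ℂ)‖ ≤ 1}).toReal
        = (4/π) * Real.arctan (Real.sqrt ((2 - u) / (2 + u)))) ∧
    (2 < u →
      (μ {ω | ‖Complex.exp ((Θ ω : ℂ) * Complex.I) - (u:ℂ)‖ ≤ 1}).toReal = 0) :=
  nearfield_probability_unit_general Ω μ Θ hΘ hunif u hu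
end
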